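/- arXiv:2108.00880 — 2 statements merged into one kernel-verified Lean document; each statement's English description precedes it below -/
import Mathlib

section
/- Let S be a nondegenerate n-dimensional simplex in ℝ^n with basic Lagrange polynomials λ_1,…,λ_{n+1}, and let Ω be a convex body in ℝ^n. Then α(Ω;S) = Σ_{j=1}^{n+1} max_{x∈Ω} (−λ_j(x)) + 1. -/
open Set MeasureTheory Finset Metric

noncomputable section

/-- The unit cube `Q_n = [0,1]^n` in `ℝ^n`. -/
def unitCube (n : ℕ) : Set (EuclideanSpace ℝ (Fin n)) :=
  {x | ∀ i, x i ∈ Set.Icc (0 : ℝ) 1}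

/-- The set of vertices of the unit cube `Q_n`. -/
def cubeVertices (n : ℕ) : Set (EuclideanSpace ℝ (Fin n)) :=
  {x | ∀ i, x i = 0 ∨ x i = 1}

/-- The closed unit Euclidean ball `B_n` in `ℝ^n`. -/
def unitBall (n : ℕ) : Set (EuclideanSpace ℝ (Fin n)) :=
  Metric.closedBall 0 1

/-- Image of a set under the homothety with center `c` and ratio `σ`. -/
def homothet {n : ℕ} (c : EuclideanSpace ℝ (Fin n)) (σ : ℝ)
    (S : Set (EuclideanSpace ℝ (Fin n))) : Set (EuclideanSpace ℝ (Fin n)) :=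
  (fun x => c + σ • (x - c)) '' S

/-- The simplex with vertex set `v` (its convex hull). -/
def simplexSet {n : ℕ} (v : Fin (n + 1) → EuclideanSpace ℝ (Fin n)) :
    Set (EuclideanSpace ℝ (Fin n)) :=
  convexHull ℝ (Set.range v)

/-- The centroid (center of gravity) of the simplex with vertices `v`. -/
def simplexCentroid {n : ℕ} (v : Fin (n + 1) → EuclideanSpace ℝ (Fin n)) :
    EuclideanSpace ℝ (Fin n) :=
  Finset.univ.centroid ℝ v

/-- `σS`: homothetic copy of the simplex `S` with center at its centroid and ratio `σ`. -/
def simplexHomothet {n : ℕ} (v : Fin (n + 1) → EuclideanSpace ℝ (Fin n)) (σ : ℝ) :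
    Set (EuclideanSpace ℝ (Fin n)) :=
  homothet (simplexCentroid v) σ (simplexSet v)

/-- The absorption index `ξ(Ω;S)`: minimal `σ ≥ 1` with `Ω ⊆ σS`. -/
def xiInd {n : ℕ} (Ω : Set (EuclideanSpace ℝ (Fin n)))
    (v : Fin (n + 1) → EuclideanSpace ℝ (Fin n)) : ℝ :=
  sInf {σ : ℝ | 1 ≤ σ ∧ Ω ⊆ simplexHomothet v σ}

/-- `α(Ω;S)`: minimal `σ > 0` such that `Ω` is contained in a translate of `σS`. -/
def alphaInd {n : ℕ} (Ω : Set (EuclideanSpace ℝ (Fin n)))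
    (v : Fin (n + 1) → EuclideanSpace ℝ (Fin n)) : ℝ :=
  sInf {σ : ℝ | 0 < σ ∧ ∃ t : EuclideanSpace ℝ (Fin n),
    Ω ⊆ (fun x => t + x) '' simplexHomothet v σ}

/-- `lam` is the family of basic Lagrange polynomials of the simplex with vertices `v`:
affine maps with `lam j (v k) = δ_{jk}`. -/
def IsLagrangeBasis {n : ℕ} (v : Fin (n + 1) → EuclideanSpace ℝ (Fin n))
    (lam : Fin (n + 1) → (EuclideanSpace ℝ (Fin n) →ᵃ[ℝ] ℝ)) : Prop :=
  ∀ j k, lam j (v k) = if j = k then (1 : ℝ) else 0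

/-- The `i`-th axial diameter of a set: maximal length of a segment contained in it
and parallel to the `i`-th coordinate axis. -/
def axialDiameter {n : ℕ} (i : Fin n) (S : Set (EuclideanSpace ℝ (Fin n))) : ℝ :=
  sSup {t : ℝ | 0 ≤ t ∧ ∃ x, x ∈ S ∧ x + t • (EuclideanSpace.single i (1 : ℝ)) ∈ S}

/-- Norm of the interpolation projector with Lagrange basis `lam`, as an operator
`C(Ω) → C(Ω)`: it equals `max_{x ∈ Ω} Σ_j |λ_j(x)|`. -/
def projNorm {n : ℕ} (Ω : Set (EuclideanSpace ℝ (Fin n)))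
    (lam : Fin (n + 1) → (EuclideanSpace ℝ (Fin n) →ᵃ[ℝ] ℝ)) : ℝ :=
  sSup ((fun x => ∑ j, |lam j x|) '' Ω)

/-- `θ_n(Ω)`: the minimal norm of an interpolation projector with nodes in `Ω`. -/
def thetaMin (n : ℕ) (Ω : Set (EuclideanSpace ℝ (Fin n))) : ℝ :=
  sInf {t : ℝ | ∃ v : Fin (n + 1) → EuclideanSpace ℝ (Fin n),
    ∃ lam : Fin (n + 1) → (EuclideanSpace ℝ (Fin n) →ᵃ[ℝ] ℝ),
      AffineIndependent ℝ v ∧ (∀ j, v j ∈ Ω) ∧ IsLagrangeBasis v lam ∧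
      t = projNorm Ω lam}

/-- `ξ_n`: minimal absorption index of the unit cube by a contained nondegenerate simplex. -/
def xiMin (n : ℕ) : ℝ :=
  sInf {t : ℝ | ∃ v : Fin (n + 1) → EuclideanSpace ℝ (Fin n),
    AffineIndependent ℝ v ∧ simplexSet v ⊆ unitCube n ∧ t = xiInd (unitCube n) v}

/-- The standardized Legendre polynomial `χ_n` (Rodrigues formula). -/
def legendreChi (n : ℕ) (t : ℝ) : ℝ :=
  (1 / (2 ^ n * (n.factorial : ℝ))) * iteratedDeriv n (fun s : ℝ => (s ^ 2 - 1) ^ n) t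

/-- The inverse of `χ_n` on the half-axis `[1, +∞)`. -/
def legendreInv (n : ℕ) (y : ℝ) : ℝ :=
  Function.invFunOn (legendreChi n) (Set.Ici 1) y

/-- `ν_n`: the maximal volume of an `n`-dimensional simplex contained in `Q_n`. -/
def maxSimplexVol (n : ℕ) : ℝ :=
  sSup {t : ℝ | ∃ v : Fin (n + 1) → EuclideanSpace ℝ (Fin n),
    AffineIndependent ℝ v ∧ simplexSet v ⊆ unitCube n ∧
    t = (volume (simplexSet v)).toReal}

/-- `h_n`: the maximal determinant of an `n×n` matrix with entries in `{0,1}`. -/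
def maxDet01 (n : ℕ) : ℝ :=
  sSup {d : ℝ | ∃ M : Matrix (Fin n) (Fin n) ℝ,
    (∀ i j, M i j = 0 ∨ M i j = 1) ∧ d = M.det}

/-- `σ_n`: the volume of a regular `n`-dimensional simplex inscribed into `B_n`. -/
def regSimplexVol (n : ℕ) : ℝ :=
  sSup {t : ℝ | ∃ v : Fin (n + 1) → EuclideanSpace ℝ (Fin n),
    AffineIndependent ℝ v ∧ (∃ e : ℝ, ∀ j k, j ≠ k → dist (v j) (v k) = e) ∧
    (∀ j, ‖v j‖ = 1) ∧ t = (volume (simplexSet v)).toReal}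

end

/-! In the barycentric coordinates `λ_j` of `S`, which sum to `1`, the homothet with ratio `σ > 0`
and centre `c` is `{y | ∀ j, λ_j(y) ≥ (1 - σ) λ_j(c)}`, and its translate by `t` is obtained by
subtracting the linear part `ℓ_j(t)` from `λ_j(y)`. As `t` varies, `(ℓ_j(t))_j` runs through all
vectors with zero sum, so `Ω` fits into some translate iff some zero-sum vector dominates
`(max_Ω (-λ_j) + (1 - σ) λ_j(c))_j`, i.e. iff `Σ_j max_Ω (-λ_j) + 1 - σ ≤ 0`. -/

theorem exists_sum_eq_zero_and_le_iff {ι K : Type*} [Fintype ι] [Nonempty ι] [Field K]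
    [LinearOrder K] [IsStrictOrderedRing K] (a : ι → K) :
    (∃ d : ι → K, ∑ i, d i = 0 ∧ ∀ i, a i ≤ d i) ↔ ∑ i, a i ≤ 0 := by
  constructor
  · rintro ⟨d, hd, had⟩
    exact hd ▸ Finset.sum_le_sum fun i _ => had i
  · intro ha
    have hcard : (Fintype.card ι : K) ≠ 0 := Nat.cast_ne_zero.2 Fintype.card_ne_zero
    refine ⟨fun i => a i - (∑ j, a j) / Fintype.card ι, ?_, fun i => ?_⟩
    · rw [Finset.sum_sub_distrib, Finset.sum_const, Finset.card_univ, nsmul_eq_mul,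
        mul_div_cancel₀ _ hcard, sub_self]
    · have : (∑ j, a j) / Fintype.card ι ≤ 0 := div_nonpos_of_nonpos_of_nonneg ha (by positivity)
      linarith

theorem Real.sInf_setOf_pos_and_le {a : ℝ} (ha : 0 ≤ a) : sInf {σ : ℝ | 0 < σ ∧ a ≤ σ} = a := by
  rcases ha.eq_or_lt with rfl | ha
  · rw [show {σ : ℝ | 0 < σ ∧ 0 ≤ σ} = Set.Ioi 0 from
      Set.ext fun σ => and_iff_left_of_imp le_of_lt, csInf_Ioi]
  · rw [show {σ : ℝ | 0 < σ ∧ a ≤ σ} = Set.Ici a from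
      Set.ext fun σ => and_iff_right_of_imp ha.trans_le, csInf_Ici]

theorem AffineMap.apply_homothety {k E : Type*} [CommRing k] [AddCommGroup E] [Module k E]
    (f : E →ᵃ[k] k) (c x : E) (σ : k) : f (c + σ • (x - c)) = σ * f x + (1 - σ) * f c := by
  rw [add_comm, ← AffineMap.lineMap_apply_module', f.apply_lineMap, AffineMap.lineMap_apply_ring']
  ring

namespace AffineBasis

section Ring

variable {ι k E : Type*} [Ring k] [AddCommGroup E] [Module k E] (b : AffineBasis ι k E)

theorem eq_coord_of_apply_eq_ite [DecidableEq ι] {f : E →ᵃ[k] k} {j : ι}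
    (hf : ∀ i, f (b i) = if j = i then 1 else 0) : f = b.coord j :=
  AffineMap.ext_on b.tot <| by
    rintro _ ⟨i, rfl⟩
    rw [hf, b.coord_apply]

theorem sum_coord_linear_eq_zero [Fintype ι] (u : E) : ∑ i, (b.coord i).linear u = 0 := by
  have h (i : ι) : (b.coord i).linear u = b.coord i u - b.coord i 0 := by
    simpa using (b.coord i).linearMap_vsub u 0
  simp only [h, Finset.sum_sub_distrib, b.sum_coord_apply_eq_one, sub_self]

theorem exists_coord_linear_eq [Fintype ι] {d : ι → k} (hd : ∑ i, d i = 0) :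
    ∃ u : E, ∀ i, (b.coord i).linear u = d i := by
  set w : ι → k := fun i => b.coord i 0 + d i
  have hw : ∑ i, w i = 1 := by
    rw [Finset.sum_add_distrib, b.sum_coord_apply_eq_one, hd, add_zero]
  refine ⟨Finset.univ.affineCombination k b w, fun i => ?_⟩
  have h := (b.coord i).linearMap_vsub (Finset.univ.affineCombination k b w) 0
  rw [vsub_eq_sub, sub_zero] at h
  rw [h, b.coord_apply_combination_of_mem (Finset.mem_univ i) hw, vsub_eq_sub, add_sub_cancel_left]

end Ring

theorem mem_homothety_convexHull_iff {ι K E : Type*} [Field K] [LinearOrder K]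
    [IsStrictOrderedRing K] [AddCommGroup E] [Module K E] (b : AffineBasis ι K E) {σ : K}
    (hσ : 0 < σ) (c y : E) :
    y ∈ (fun x => c + σ • (x - c)) '' convexHull K (range b) ↔
      ∀ i, (1 - σ) * b.coord i c ≤ b.coord i y := by
  have hσ0 : σ ≠ 0 := hσ.ne'
  rw [b.convexHull_eq_nonneg_coord, mem_image_iff_of_inverse (g := fun y => c + σ⁻¹ • (y - c))
    (fun x => by simp [smul_smul, hσ0]) (fun y => by simp [smul_smul, hσ0])]
  refine forall_congr' fun i => ?_
  have h : σ * (σ⁻¹ * b.coord i y + (1 - σ⁻¹) * b.coord i c) =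
      b.coord i y - (1 - σ) * b.coord i c := by
    field_simp
    ring
  rw [AffineMap.apply_homothety, ← mul_nonneg_iff_of_pos_left hσ, h, sub_nonneg]

section Real

variable {ι E : Type*} [Fintype ι] [AddCommGroup E] [Module ℝ E] (b : AffineBasis ι ℝ E)
  {Ω : Set E}

theorem sum_sSup_neg_coord_add_one_nonneg (hne : Ω.Nonempty)
    (hbdd : ∀ i, BddAbove ((fun x => -b.coord i x) '' Ω)) :
    0 ≤ ∑ i, sSup ((fun x => -b.coord i x) '' Ω) + 1 := by
  obtain ⟨x, hx⟩ := hne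
  have h : ∑ i, -b.coord i x ≤ ∑ i, sSup ((fun x => -b.coord i x) '' Ω) :=
    Finset.sum_le_sum fun i _ => le_csSup (hbdd i) (mem_image_of_mem _ hx)
  rw [Finset.sum_neg_distrib, b.sum_coord_apply_eq_one] at h
  linarith

theorem exists_translate_subset_homothety_iff (hne : Ω.Nonempty)
    (hbdd : ∀ i, BddAbove ((fun x => -b.coord i x) '' Ω)) {σ : ℝ} (hσ : 0 < σ) (c : E) :
    (∃ t : E, Ω ⊆ (fun x => t + x) '' ((fun x => c + σ • (x - c)) '' convexHull ℝ (range b))) ↔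
      ∑ i, sSup ((fun x => -b.coord i x) '' Ω) + 1 ≤ σ := by
  have := b.nonempty
  set a : ι → ℝ := fun i => sSup ((fun x => -b.coord i x) '' Ω) + (1 - σ) * b.coord i c
  have hsubset (t : E) :
      Ω ⊆ (fun x => t + x) '' ((fun x => c + σ • (x - c)) '' convexHull ℝ (range b)) ↔
        ∀ i, a i ≤ (b.coord i).linear (-t) := by
    simp only [Set.image_add_left, Set.subset_def, Set.mem_preimage,
      b.mem_homothety_convexHull_iff hσ]
    rw [show (∀ x ∈ Ω, ∀ i, _) ↔ ∀ i, ∀ x ∈ Ω, _ from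
      ⟨fun h i x hx => h x hx i, fun h x hx i => h i x hx⟩]
    refine forall_congr' fun i => ?_
    rw [← le_sub_iff_add_le, csSup_le_iff (hbdd i) (hne.image _), forall_mem_image]
    refine forall₂_congr fun x _ => ?_
    rw [← vadd_eq_add, (b.coord i).map_vadd, vadd_eq_add]
    constructor <;> intro <;> linarith
  have hsum : ∑ i, a i = ∑ i, sSup ((fun x => -b.coord i x) '' Ω) + 1 - σ := by
    simp only [a, Finset.sum_add_distrib, ← Finset.mul_sum, b.sum_coord_apply_eq_one]
    ring
  simp only [hsubset]
  calc (∃ t : E, ∀ i, a i ≤ (b.coord i).linear (-t))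
      ↔ ∃ d : ι → ℝ, ∑ i, d i = 0 ∧ ∀ i, a i ≤ d i := by
        constructor
        · rintro ⟨t, ht⟩
          exact ⟨_, b.sum_coord_linear_eq_zero (-t), ht⟩
        · rintro ⟨d, hd, had⟩
          obtain ⟨u, hu⟩ := b.exists_coord_linear_eq hd
          exact ⟨-u, by simpa only [neg_neg, hu] using had⟩
    _ ↔ _ := by rw [exists_sum_eq_zero_and_le_iff, hsum, sub_nonpos]

end Real

end AffineBasis

theorem alpha_eq_lagrange_formula_general (n : ℕ)
    (v : Fin (n + 1) → EuclideanSpace ℝ (Fin n)) (hv : AffineIndependent ℝ v)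
    (lam : Fin (n + 1) → (EuclideanSpace ℝ (Fin n) →ᵃ[ℝ] ℝ))
    (hlam : IsLagrangeBasis v lam)
    (Ω : Set (EuclideanSpace ℝ (Fin n)))
    (hΩcomp : IsCompact Ω) (hΩint : (interior Ω).Nonempty) :
    alphaInd Ω v =
      (∑ j : Fin (n + 1), sSup ((fun x => -(lam j x)) '' Ω)) + 1 := by
  let b : AffineBasis (Fin (n + 1)) ℝ (EuclideanSpace ℝ (Fin n)) :=
    ⟨v, hv, hv.affineSpan_eq_top_iff_card_eq_finrank_add_one.2 (by simp)⟩
  obtain rfl : lam = b.coord := funext fun j => b.eq_coord_of_apply_eq_ite (hlam j)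
  have hne : Ω.Nonempty := hΩint.mono interior_subset
  have hbdd (j : Fin (n + 1)) : BddAbove ((fun x => -b.coord j x) '' Ω) :=
    hΩcomp.bddAbove_image (b.coord j).continuous_of_finiteDimensional.neg.continuousOn
  rw [alphaInd, ← Real.sInf_setOf_pos_and_le (b.sum_sSup_neg_coord_add_one_nonneg hne hbdd)]
  congr 1
  ext σ
  exact and_congr_right fun hσ => b.exists_translate_subset_homothety_iff hne hbdd hσ _

/-- For a nondegenerate simplex `S` with basic Lagrange polynomials `λ_j`
and a convex body `Ω`:  `α(Ω;S) = Σ_j max_{x∈Ω}(−λ_j(x)) + 1`. -/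
theorem alpha_eq_lagrange_formula (n : ℕ) (hn : 0 < n)
    (v : Fin (n + 1) → EuclideanSpace ℝ (Fin n)) (hv : AffineIndependent ℝ v)
    (lam : Fin (n + 1) → (EuclideanSpace ℝ (Fin n) →ᵃ[ℝ] ℝ))
    (hlam : IsLagrangeBasis v lam)
    (Ω : Set (EuclideanSpace ℝ (Fin n)))
    (hΩcomp : IsCompact Ω) (hΩconv : Convex ℝ Ω) (hΩint : (interior Ω).Nonempty) :
    alphaInd Ω v =
      (∑ j : Fin (n + 1), sSup ((fun x => -(lam j x)) '' Ω)) + 1 :=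
  alpha_eq_lagrange_formula_general n v hv lam hlam Ω hΩcomp hΩint
end

section
/- Suppose n+1 is an Hadamard number, i.e., there exists an Hadamard matrix of order n+1. Then there exists a regular n-dimensional simplex S (all edges of equal length, namely √((n+1)/2)) all of whose vertices are vertices of the unit cube Q_n, such that: ξ(S) = α(S) = n, hence ξ_n = n; d_i(S) = 1 for every i = 1,…,n; and the simplex nS is circumscribed around Q_n in such a way that each (n−1)-dimensional face of nS contains exactly one vertex of Q_n. -/
open Set MeasureTheory Finset Metric

/-!
Multiplying each row of the Hadamard matrix by its first entry and dropping the first column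
leaves `n + 1` sign vectors `sⱼ ∈ {±1}ⁿ` with `⟨sⱼ, sₖ⟩ = -1` for `j ≠ k`. The cube vertices
`vⱼ = (1 + sⱼ) / 2` then have the Lagrange basis `λⱼ(x) = (1 + ⟨sⱼ, 2x - 1⟩) / (n + 1)`, whose
minimum `(1 - n) / (n + 1)` over `Q_n` is attained only at the opposite vertex `(1 - sⱼ) / 2`.
Since `x ∈ σS` iff `λⱼ(x) ≥ (1 - σ) / (n + 1)` for all `j`, this gives `Q_n ⊆ nS`.

Conversely `n ≤ σ` whenever `S ⊆ Q_n ⊆ t + σS`: as `S ⊆ Q_n`, every chord of `S` in direction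
`eᵢ` has length at most `1`, which forces `∑ⱼ |∂ᵢλⱼ| ≥ 2`; evaluating each `λⱼ` at the vertex of
`Q_n` where it is smallest and summing over `j` then gives `1 - σ ≤ 1 - n`.
-/
section LagrangeBasis

variable {n : ℕ} {v : Fin (n + 1) → EuclideanSpace ℝ (Fin n)}
  {lam : Fin (n + 1) → (EuclideanSpace ℝ (Fin n) →ᵃ[ℝ] ℝ)}

theorem AffineBasis.isLagrangeBasis_coord
    (b : AffineBasis (Fin (n + 1)) ℝ (EuclideanSpace ℝ (Fin n))) :
    IsLagrangeBasis b b.coord :=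
  b.coord_apply

theorem IsLagrangeBasis.apply_affineCombination (hl : IsLagrangeBasis v lam) {w : Fin (n + 1) → ℝ}
    (hw : ∑ k, w k = 1) (j : Fin (n + 1)) : lam j (univ.affineCombination ℝ v w) = w j := by
  rw [Finset.map_affineCombination _ _ _ hw,
    Finset.affineCombination_eq_linear_combination _ _ _ hw]
  simp [hl j]

theorem IsLagrangeBasis.affineIndependent (hl : IsLagrangeBasis v lam) : AffineIndependent ℝ v := by
  rw [affineIndependent_iff_eq_of_fintype_affineCombination_eq]
  intro w₁ w₂ hw₁ hw₂ h
  funext j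
  rw [← hl.apply_affineCombination hw₁, ← hl.apply_affineCombination hw₂, h]

theorem AffineIndependent.exists_affineBasis (hv : AffineIndependent ℝ v) :
    ∃ b : AffineBasis (Fin (n + 1)) ℝ (EuclideanSpace ℝ (Fin n)), ⇑b = v :=
  ⟨⟨v, hv, hv.affineSpan_eq_top_iff_card_eq_finrank_add_one.mpr (by simp)⟩, rfl⟩

theorem AffineIndependent.exists_isLagrangeBasis (hv : AffineIndependent ℝ v) :
    ∃ lam : Fin (n + 1) → (EuclideanSpace ℝ (Fin n) →ᵃ[ℝ] ℝ), IsLagrangeBasis v lam := by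
  obtain ⟨b, rfl⟩ := hv.exists_affineBasis
  exact ⟨b.coord, b.isLagrangeBasis_coord⟩

theorem IsLagrangeBasis.exists_affineBasis (hl : IsLagrangeBasis v lam) :
    ∃ b : AffineBasis (Fin (n + 1)) ℝ (EuclideanSpace ℝ (Fin n)), ⇑b = v ∧ b.coord = lam := by
  obtain ⟨b, rfl⟩ := hl.affineIndependent.exists_affineBasis
  refine ⟨b, rfl, funext fun j => AffineMap.ext_on b.tot ?_⟩
  rintro _ ⟨k, rfl⟩
  exact (b.coord_apply j k).trans (hl j k).symm

theorem IsLagrangeBasis.sum_apply (hl : IsLagrangeBasis v lam) (x : EuclideanSpace ℝ (Fin n)) :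
    ∑ j, lam j x = 1 := by
  obtain ⟨b, rfl, rfl⟩ := hl.exists_affineBasis
  exact b.sum_coord_apply_eq_one x

theorem IsLagrangeBasis.sum_linear_apply (hl : IsLagrangeBasis v lam)
    (w : EuclideanSpace ℝ (Fin n)) : ∑ j, (lam j).linear w = 0 := by
  have h : ∀ j, (lam j).linear w = lam j w - lam j 0 := fun j => by
    simpa using (lam j).linearMap_vsub w 0
  simp [h, hl.sum_apply]

theorem IsLagrangeBasis.eq_of_forall_apply_eq (hl : IsLagrangeBasis v lam)
    {x y : EuclideanSpace ℝ (Fin n)} (h : ∀ j, lam j x = lam j y) : x = y := by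
  obtain ⟨b, rfl, rfl⟩ := hl.exists_affineBasis
  exact b.ext_elem h

theorem IsLagrangeBasis.mem_simplexSet_iff (hl : IsLagrangeBasis v lam)
    {x : EuclideanSpace ℝ (Fin n)} : x ∈ simplexSet v ↔ ∀ j, 0 ≤ lam j x := by
  obtain ⟨b, rfl, rfl⟩ := hl.exists_affineBasis
  rw [simplexSet, b.convexHull_eq_nonneg_coord]
  rfl

theorem IsLagrangeBasis.apply_simplexCentroid (hl : IsLagrangeBasis v lam) (j : Fin (n + 1)) :
    lam j (simplexCentroid v) = 1 / (n + 1) := by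
  obtain ⟨b, rfl, rfl⟩ := hl.exists_affineBasis
  simpa [simplexCentroid] using b.coord_apply_centroid (Finset.mem_univ j)

theorem AffineMap.apply_homothety_eq (f : EuclideanSpace ℝ (Fin n) →ᵃ[ℝ] ℝ)
    (c x : EuclideanSpace ℝ (Fin n)) (σ : ℝ) :
    f (c + σ • (x - c)) = f c + σ * (f x - f c) := by
  simpa [AffineMap.lineMap_apply_module', AffineMap.lineMap_apply_ring', add_comm, mul_comm]
    using f.apply_lineMap c x σ

theorem IsLagrangeBasis.mem_simplexHomothet_iff (hl : IsLagrangeBasis v lam) {σ : ℝ} (hσ : 0 < σ)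
    {x : EuclideanSpace ℝ (Fin n)} :
    x ∈ simplexHomothet v σ ↔ ∀ j, (1 - σ) / (n + 1) ≤ lam j x := by
  set c := simplexCentroid v
  have hc := hl.apply_simplexCentroid
  constructor
  · rintro ⟨y, hy, rfl⟩ j
    have := hl.mem_simplexSet_iff.1 hy j
    rw [AffineMap.apply_homothety_eq, hc]
    have h : 1 / (n + 1) + σ * (lam j y - 1 / (n + 1)) = (1 - σ) / (n + 1) + σ * lam j y := by
      ring
    rw [h]
    exact le_add_of_nonneg_right (mul_nonneg hσ.le this)
  · intro h
    refine ⟨c + σ⁻¹ • (x - c), hl.mem_simplexSet_iff.2 fun j => ?_, ?_⟩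
    · rw [AffineMap.apply_homothety_eq, hc]
      have h' : 1 / (n + 1) + σ⁻¹ * (lam j x - 1 / (n + 1))
          = σ⁻¹ * (lam j x - (1 - σ) / (n + 1)) := by
        field_simp
        ring
      rw [h']
      exact mul_nonneg (inv_nonneg.2 hσ.le) (sub_nonneg.2 (h j))
    · show c + σ • (c + σ⁻¹ • (x - c) - c) = x
      rw [add_sub_cancel_left, smul_smul, mul_inv_cancel₀ hσ.ne', one_smul, add_sub_cancel]

end LagrangeBasis

section UnitCube

variable {n : ℕ}

theorem convex_unitCube (n : ℕ) : Convex ℝ (unitCube n) := by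
  intro x hx y hy a b ha hb hab i
  simpa using convex_Icc (0 : ℝ) 1 (hx i) (hy i) ha hb hab

theorem cubeVertices_subset_unitCube (n : ℕ) : cubeVertices n ⊆ unitCube n := by
  intro x hx i
  rcases hx i with h | h <;> simp [h]

theorem simplexSet_subset_unitCube {v : Fin (n + 1) → EuclideanSpace ℝ (Fin n)}
    (hv : ∀ j, v j ∈ unitCube n) : simplexSet v ⊆ unitCube n :=
  convexHull_min (Set.range_subset_iff.2 hv) (convex_unitCube n)

theorem add_smul_single_apply_self (x : EuclideanSpace ℝ (Fin n)) (t : ℝ) (i : Fin n) :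
    (x + t • EuclideanSpace.single i (1 : ℝ)) i = x i + t := by
  simp

theorem axialDiameter_eq_one {S : Set (EuclideanSpace ℝ (Fin n))} (hS : S ⊆ unitCube n)
    {i : Fin n} {x : EuclideanSpace ℝ (Fin n)} (hx : x ∈ S)
    (hx' : x + EuclideanSpace.single i 1 ∈ S) : axialDiameter i S = 1 := by
  refine IsGreatest.csSup_eq ⟨⟨zero_le_one, x, hx, by simpa using hx'⟩, ?_⟩
  rintro t ⟨-, y, hy, hy'⟩
  have h₀ := (hS hy i).1
  have h₁ := (hS hy' i).2
  rw [add_smul_single_apply_self] at h₁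
  linarith

theorem AffineMap.apply_add_smul (f : EuclideanSpace ℝ (Fin n) →ᵃ[ℝ] ℝ)
    (x w : EuclideanSpace ℝ (Fin n)) (t : ℝ) : f (x + t • w) = f x + t * f.linear w := by
  rw [add_comm x, ← vadd_eq_add, f.map_vadd, map_smul, vadd_eq_add, smul_eq_mul, add_comm]

theorem AffineMap.apply_eq_add_sum (f : EuclideanSpace ℝ (Fin n) →ᵃ[ℝ] ℝ)
    (x : EuclideanSpace ℝ (Fin n)) :
    f x = f 0 + ∑ i, x i * f.linear (EuclideanSpace.single i 1) := by
  have h : f x = f.linear x + f 0 := by simpa using f.map_vadd 0 x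
  conv_lhs => rw [h, ← (EuclideanSpace.basisFun (Fin n) ℝ).sum_repr x]
  simp [add_comm]

theorem AffineMap.le_apply_of_mem_unitCube (f : EuclideanSpace ℝ (Fin n) →ᵃ[ℝ] ℝ)
    {x : EuclideanSpace ℝ (Fin n)} (hx : x ∈ unitCube n) :
    f 0 + ∑ i, min (f.linear (EuclideanSpace.single i 1)) 0 ≤ f x := by
  rw [f.apply_eq_add_sum x]
  gcongr with i
  obtain ⟨h₀, h₁⟩ := hx i
  rcases le_total 0 (f.linear (EuclideanSpace.single i 1)) with h | h
  · rw [min_eq_right h]; positivity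
  · rw [min_eq_left h]; nlinarith

theorem AffineMap.exists_mem_cubeVertices_apply_eq (f : EuclideanSpace ℝ (Fin n) →ᵃ[ℝ] ℝ) :
    ∃ z ∈ cubeVertices n, f z = f 0 + ∑ i, min (f.linear (EuclideanSpace.single i 1)) 0 := by
  refine ⟨WithLp.toLp 2 fun i => if f.linear (EuclideanSpace.single i 1) < 0 then 1 else 0,
    fun i => by by_cases h : f.linear (EuclideanSpace.single i 1) < 0 <;> simp [h], ?_⟩
  rw [f.apply_eq_add_sum]
  congr 1
  refine Finset.sum_congr rfl fun i _ => ?_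
  by_cases h : f.linear (EuclideanSpace.single i 1) < 0
  · simp [h, min_eq_left h.le]
  · simp [h, min_eq_right (not_lt.1 h)]

end UnitCube

section LowerBound

variable {n : ℕ} {v : Fin (n + 1) → EuclideanSpace ℝ (Fin n)}
  {lam : Fin (n + 1) → (EuclideanSpace ℝ (Fin n) →ᵃ[ℝ] ℝ)}

theorem IsLagrangeBasis.two_le_sum_abs_linear_single (hl : IsLagrangeBasis v lam)
    (hS : simplexSet v ⊆ unitCube n) (i : Fin n) :
    2 ≤ ∑ j, |(lam j).linear (EuclideanSpace.single i 1)| := by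
  set e : EuclideanSpace ℝ (Fin n) := EuclideanSpace.single i 1
  set m := ∑ j, |(lam j).linear e|
  have hm : 0 < m := by
    refine (Finset.sum_nonneg fun j _ => abs_nonneg _).lt_of_ne fun h => ?_
    have hzero : ∀ j, (lam j).linear e = 0 := fun j =>
      abs_eq_zero.1 ((Finset.sum_eq_zero_iff_of_nonneg fun j _ => abs_nonneg _).1 h.symm j
        (Finset.mem_univ j))
    have : e = 0 := hl.eq_of_forall_apply_eq fun j => by
      simpa [hzero j] using (lam j).apply_add_smul 0 e 1
    simp [e] at this
  -- the point of `S` with barycentric coordinates `|∂ᵢλⱼ| / m` is the midpoint of a chord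
  -- of length `2 / m` in direction `e`
  have hw : ∑ j, |(lam j).linear e| / m = 1 := by rw [← Finset.sum_div, div_self hm.ne']
  set y := univ.affineCombination ℝ v fun j => |(lam j).linear e| / m
  have hy : ∀ t : ℝ, |t| ≤ m⁻¹ → y + t • e ∈ simplexSet v := fun t ht =>
    hl.mem_simplexSet_iff.2 fun j => by
      rw [(lam j).apply_add_smul, hl.apply_affineCombination hw, div_eq_mul_inv]
      have : |t * (lam j).linear e| ≤ |(lam j).linear e| * m⁻¹ := by
        rw [abs_mul, mul_comm]
        exact mul_le_mul_of_nonneg_left ht (abs_nonneg _)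
      linarith [neg_abs_le (t * (lam j).linear e)]
  have h₀ := (hS (hy (-m⁻¹) (by simp [abs_of_pos hm])) i).1
  have h₁ := (hS (hy m⁻¹ (by simp [abs_of_pos hm])) i).2
  rw [add_smul_single_apply_self] at h₀ h₁
  have : 2 * m⁻¹ ≤ 1 := by linarith
  rwa [← div_eq_mul_inv, div_le_one hm] at this

theorem IsLagrangeBasis.natCast_le_of_unitCube_subset (hl : IsLagrangeBasis v lam)
    (hS : simplexSet v ⊆ unitCube n) {σ : ℝ} (hσ : 0 < σ) (t : EuclideanSpace ℝ (Fin n))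
    (hQ : unitCube n ⊆ (fun x => t + x) '' simplexHomothet v σ) : (n : ℝ) ≤ σ := by
  set a : Fin (n + 1) → Fin n → ℝ := fun j i => (lam j).linear (EuclideanSpace.single i 1)
  have hcol : ∀ i, ∑ j, min (a j i) 0 ≤ -1 := fun i => by
    have h : ∀ j, min (a j i) 0 = (a j i - |a j i|) / 2 := fun j => by
      rcases le_total 0 (a j i) with h | h
      · rw [min_eq_right h, abs_of_nonneg h]; ring
      · rw [min_eq_left h, abs_of_nonpos h]; ring
    rw [Finset.sum_congr rfl fun j _ => h j, ← Finset.sum_div, Finset.sum_sub_distrib,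
      hl.sum_linear_apply]
    linarith [hl.two_le_sum_abs_linear_single hS i]
  -- evaluate each `λⱼ` at the cube vertex where it is smallest
  have hvert : ∀ j, (1 - σ) / (n + 1) ≤ lam j 0 + ∑ i, min (a j i) 0 - (lam j).linear t := by
    intro j
    obtain ⟨z, hz, hzj⟩ := (lam j).exists_mem_cubeVertices_apply_eq
    obtain ⟨y, hy, rfl⟩ := hQ (cubeVertices_subset_unitCube n hz)
    have hty : lam j (t + y) = lam j y + (lam j).linear t := by
      simpa [add_comm] using (lam j).apply_add_smul y t 1
    have := (hl.mem_simplexHomothet_iff hσ).1 hy j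
    simp only [a, ← hzj, hty]
    linarith
  have hsum := Finset.sum_le_sum fun j (_ : j ∈ Finset.univ) => hvert j
  rw [Finset.sum_sub_distrib, Finset.sum_add_distrib, hl.sum_apply, hl.sum_linear_apply,
    Finset.sum_comm] at hsum
  have : ∑ i : Fin n, ∑ j, min (a j i) 0 ≤ -n := by
    simpa using Finset.sum_le_sum fun i (_ : i ∈ Finset.univ) => hcol i
  simp only [Finset.sum_const, Finset.card_univ, Fintype.card_fin, nsmul_eq_mul,
    Nat.cast_add, Nat.cast_one, sub_zero] at hsum
  rw [mul_div_cancel₀ _ (by positivity)] at hsum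
  linarith

end LowerBound

section AbsorptionIndex

variable {n : ℕ} {v : Fin (n + 1) → EuclideanSpace ℝ (Fin n)}
  {lam : Fin (n + 1) → (EuclideanSpace ℝ (Fin n) →ᵃ[ℝ] ℝ)}

theorem IsLagrangeBasis.exists_unitCube_subset_simplexHomothet (hl : IsLagrangeBasis v lam) :
    ∃ σ, 1 ≤ σ ∧ unitCube n ⊆ simplexHomothet v σ := by
  obtain ⟨m, hm⟩ := (Set.finite_range fun j =>
    lam j 0 + ∑ i, min ((lam j).linear (EuclideanSpace.single i 1)) 0).bddBelow
  refine ⟨max 1 (1 - (n + 1) * m), le_max_left _ _, fun x hx => ?_⟩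
  refine (hl.mem_simplexHomothet_iff (by positivity)).2 fun j => ?_
  calc (1 - max 1 (1 - (n + 1) * m)) / (n + 1) ≤ m := by
        rw [div_le_iff₀ (by positivity)]
        linarith [le_max_right 1 (1 - (n + 1) * m)]
    _ ≤ _ := hm ⟨j, rfl⟩
    _ ≤ lam j x := (lam j).le_apply_of_mem_unitCube hx

theorem natCast_le_xiInd (hv : AffineIndependent ℝ v) (hS : simplexSet v ⊆ unitCube n) :
    (n : ℝ) ≤ xiInd (unitCube n) v := by
  obtain ⟨lam, hl⟩ := hv.exists_isLagrangeBasis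
  refine le_csInf hl.exists_unitCube_subset_simplexHomothet fun σ ⟨hσ, hQ⟩ => ?_
  exact hl.natCast_le_of_unitCube_subset hS (by linarith) 0 (by simpa using hQ)

theorem IsLagrangeBasis.xiInd_unitCube_eq (hn : 0 < n) (hl : IsLagrangeBasis v lam)
    (hS : simplexSet v ⊆ unitCube n) (hQ : unitCube n ⊆ simplexHomothet v n) :
    xiInd (unitCube n) v = n :=
  IsLeast.csInf_eq ⟨⟨by exact_mod_cast hn, hQ⟩, fun _ ⟨hσ, hQ'⟩ =>
    hl.natCast_le_of_unitCube_subset hS (by linarith) 0 (by simpa using hQ')⟩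

theorem IsLagrangeBasis.alphaInd_unitCube_eq (hn : 0 < n) (hl : IsLagrangeBasis v lam)
    (hS : simplexSet v ⊆ unitCube n) (hQ : unitCube n ⊆ simplexHomothet v n) :
    alphaInd (unitCube n) v = n :=
  IsLeast.csInf_eq ⟨⟨by exact_mod_cast hn, 0, by simpa using hQ⟩,
    fun _ ⟨hσ, t, hQ'⟩ => hl.natCast_le_of_unitCube_subset hS hσ t hQ'⟩

theorem xiMin_eq_of_xiInd_eq (hv : AffineIndependent ℝ v) (hS : simplexSet v ⊆ unitCube n)
    (hξ : xiInd (unitCube n) v = n) : xiMin n = n :=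
  IsLeast.csInf_eq ⟨⟨v, hv, hS, hξ.symm⟩, fun _ ⟨_, hw, hwS, h⟩ => h ▸ natCast_le_xiInd hw hwS⟩

end AbsorptionIndex

section SignVectors

variable {n : ℕ}

noncomputable def signVertex (s : Fin n → ℝ) : EuclideanSpace ℝ (Fin n) :=
  WithLp.toLp 2 fun i => (1 + s i) / 2

noncomputable def signLagrange (s : Fin n → ℝ) : EuclideanSpace ℝ (Fin n) →ᵃ[ℝ] ℝ :=
  ((∑ i, (2 * s i / (n + 1)) • EuclideanSpace.proj i : EuclideanSpace ℝ (Fin n) →L[ℝ] ℝ)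
    : EuclideanSpace ℝ (Fin n) →ₗ[ℝ] ℝ).toAffineMap
    + AffineMap.const ℝ _ ((1 - ∑ i, s i) / (n + 1))

theorem signLagrange_apply (s : Fin n → ℝ) (x : EuclideanSpace ℝ (Fin n)) :
    signLagrange s x = (1 + ∑ i, s i * (2 * x i - 1)) / (n + 1) := by
  have h : ∑ i, s i * (2 * x i - 1) = ∑ i, 2 * s i * x i - ∑ i, s i := by
    rw [← Finset.sum_sub_distrib]
    exact Finset.sum_congr rfl fun i _ => by ring
  simp [signLagrange, div_mul_eq_mul_div, ← Finset.sum_div, h]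
  ring

theorem signLagrange_linear_single (s : Fin n → ℝ) (i : Fin n) :
    (signLagrange s).linear (EuclideanSpace.single i 1) = 2 * s i / (n + 1) := by
  simp [signLagrange]

theorem signLagrange_signVertex (s t : Fin n → ℝ) :
    signLagrange s (signVertex t) = (1 + ∑ i, s i * t i) / (n + 1) := by
  simp [signLagrange_apply, signVertex, mul_div_cancel₀]

theorem signVertex_mem_cubeVertices {s : Fin n → ℝ} (hs : ∀ i, s i = 1 ∨ s i = -1) :
    signVertex s ∈ cubeVertices n := fun i => by
  rcases hs i with h | h <;> simp [signVertex, h]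

theorem sum_mul_self_of_sign {s : Fin n → ℝ} (hs : ∀ i, s i = 1 ∨ s i = -1) :
    ∑ i, s i * s i = n := by
  simp [Finset.sum_congr rfl fun i _ => show s i * s i = 1 by rcases hs i with h | h <;> simp [h]]

theorem dist_signVertex {s t : Fin n → ℝ} (hs : ∀ i, s i = 1 ∨ s i = -1)
    (ht : ∀ i, t i = 1 ∨ t i = -1) :
    dist (signVertex s) (signVertex t) = √((n - ∑ i, s i * t i) / 2) := by
  have h : ∀ i, dist ((signVertex s) i) ((signVertex t) i) ^ 2 = (1 - s i * t i) / 2 := fun i => by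
    rcases hs i with h | h <;> rcases ht i with h' | h' <;>
      norm_num [signVertex, h, h', Real.dist_eq]
  rw [EuclideanSpace.dist_eq, Finset.sum_congr rfl fun i _ => h i, ← Finset.sum_div,
    Finset.sum_sub_distrib]
  simp

theorem neg_one_le_sign_mul {s x : ℝ} (hs : s = 1 ∨ s = -1) (hx : x ∈ Set.Icc 0 1) :
    -1 ≤ s * (2 * x - 1) := by
  rcases hs with rfl | rfl <;> linarith [hx.1, hx.2]

theorem div_le_signLagrange {s : Fin n → ℝ} (hs : ∀ i, s i = 1 ∨ s i = -1)
    {x : EuclideanSpace ℝ (Fin n)} (hx : x ∈ unitCube n) :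
    (1 - n) / (n + 1) ≤ signLagrange s x := by
  rw [signLagrange_apply]
  gcongr
  have : ∑ _i : Fin n, (-1 : ℝ) ≤ ∑ i, s i * (2 * x i - 1) :=
    Finset.sum_le_sum fun i _ => neg_one_le_sign_mul (hs i) (hx i)
  simp only [sum_const, card_univ, Fintype.card_fin, nsmul_eq_mul, mul_neg, mul_one] at this
  linarith

theorem existsUnique_signLagrange_eq {s : Fin n → ℝ} (hs : ∀ i, s i = 1 ∨ s i = -1) :
    ∃! x, x ∈ cubeVertices n ∧ signLagrange s x = (1 - n) / (n + 1) := by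
  have hs' : ∀ i, (-s) i = 1 ∨ (-s) i = -1 := fun i => by rcases hs i with h | h <;> simp [h]
  refine ⟨signVertex (-s), ⟨signVertex_mem_cubeVertices hs', ?_⟩, ?_⟩
  · simp [signLagrange_signVertex, sum_mul_self_of_sign hs, sub_eq_add_neg]
  rintro x ⟨hx, hx'⟩
  rw [signLagrange_apply, div_left_inj' (by positivity)] at hx'
  have hterm := fun i (_ : i ∈ Finset.univ) =>
    neg_one_le_sign_mul (hs i) (cubeVertices_subset_unitCube n hx i)
  have heq := (Finset.sum_eq_sum_iff_of_le hterm).1 (by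
    simp only [sum_const, card_univ, Fintype.card_fin, nsmul_eq_mul, mul_neg, mul_one]
    linarith)
  ext i
  have := heq i (Finset.mem_univ i)
  rcases hs i with h | h <;> rw [h] at this <;> simp [signVertex, h] <;> linarith

end SignVectors

section SignFamily

variable {n : ℕ} {s : Fin (n + 1) → Fin n → ℝ}

theorem isLagrangeBasis_signVertex (hs : ∀ j i, s j i = 1 ∨ s j i = -1)
    (hrow : Pairwise fun j k => ∑ i, s j i * s k i = -1) :
    IsLagrangeBasis (fun j => signVertex (s j)) (fun j => signLagrange (s j)) := by
  intro j k
  rw [signLagrange_signVertex]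
  split_ifs with h
  · rw [h, sum_mul_self_of_sign (hs k), add_comm, div_self (by positivity)]
  · simp [hrow h]

theorem simplexSet_signVertex_subset_unitCube (hs : ∀ j i, s j i = 1 ∨ s j i = -1) :
    simplexSet (fun j => signVertex (s j)) ⊆ unitCube n :=
  simplexSet_subset_unitCube fun j =>
    cubeVertices_subset_unitCube n (signVertex_mem_cubeVertices (hs j))

theorem unitCube_subset_simplexHomothet_signVertex (hn : 0 < n)
    (hs : ∀ j i, s j i = 1 ∨ s j i = -1) (hrow : Pairwise fun j k => ∑ i, s j i * s k i = -1) :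
    unitCube n ⊆ simplexHomothet (fun j => signVertex (s j)) n := fun _ hx =>
  ((isLagrangeBasis_signVertex hs hrow).mem_simplexHomothet_iff (by positivity)).2 fun j =>
    div_le_signLagrange (hs j) hx

theorem axialDiameter_simplexSet_signVertex (hs : ∀ j i, s j i = 1 ∨ s j i = -1)
    (hrow : Pairwise fun j k => ∑ i, s j i * s k i = -1) (i : Fin n) :
    axialDiameter i (simplexSet fun j => signVertex (s j)) = 1 := by
  set e : EuclideanSpace ℝ (Fin n) := EuclideanSpace.single i 1
  -- a unit chord through the centre `signVertex 0` of the cube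
  have hmem : ∀ t : ℝ, |t| ≤ 1 / 2 →
      signVertex (0 : Fin n → ℝ) + t • e ∈ simplexSet fun j => signVertex (s j) :=
    fun t ht => (isLagrangeBasis_signVertex hs hrow).mem_simplexSet_iff.2 fun j => by
      rw [AffineMap.apply_add_smul, signLagrange_signVertex, signLagrange_linear_single]
      have h : (1 + ∑ i, s j i * (0 : Fin n → ℝ) i) / (n + 1) + t * (2 * s j i / (n + 1))
          = (1 + 2 * t * s j i) / (n + 1) := by
        simp only [Pi.zero_apply, mul_zero, sum_const_zero, add_zero]
        ring
      rw [h]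
      apply div_nonneg _ (by positivity)
      rcases hs j i with h | h <;> rw [h] <;> linarith [abs_le.1 ht]
  refine axialDiameter_eq_one (simplexSet_signVertex_subset_unitCube hs)
    (hmem (-1 / 2) (by norm_num [abs_div])) ?_
  convert hmem (1 / 2) (by norm_num [abs_div]) using 1
  module

end SignFamily

theorem sum_mul_succ_of_orthogonal_rows {ι : Type*} {n : ℕ} (H : Matrix ι (Fin (n + 1)) ℝ)
    {j k : ι} (hj : H j 0 * H j 0 = 1) (hk : H k 0 * H k 0 = 1) (hjk : (H * H.transpose) j k = 0) :
    ∑ i : Fin n, H j 0 * H j i.succ * (H k 0 * H k i.succ) = -1 := by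
  rw [Matrix.mul_apply, Fin.sum_univ_succ] at hjk
  simp only [Matrix.transpose_apply] at hjk
  have h : ∑ i : Fin n, H j 0 * H j i.succ * (H k 0 * H k i.succ)
      = H j 0 * H k 0 * ∑ i : Fin n, H j i.succ * H k i.succ := by
    rw [Finset.mul_sum]
    exact Finset.sum_congr rfl fun _ _ => by ring
  rw [h, eq_neg_of_add_eq_zero_right hjk]
  linear_combination (-(H k 0 * H k 0)) * hj - hk

/-- Theorem 2.1: If `n+1` is an Hadamard number, there exists a regular
simplex `S` with vertices among vertices of `Q_n` (edge length `√((n+1)/2)`) such that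
`ξ(S) = α(S) = n`, hence `ξ_n = n`, all axial diameters equal `1`, and `nS` is
circumscribed around `Q_n` with each `(n−1)`-face of `nS` containing exactly one
vertex of `Q_n`. -/
theorem hadamard_gives_perfect_simplex (n : ℕ) (hn : 0 < n)
    (H : Matrix (Fin (n + 1)) (Fin (n + 1)) ℝ)
    (hHpm : ∀ i j, H i j = 1 ∨ H i j = -1)
    (hH : H * H.transpose = ((n : ℝ) + 1) • 1) :
    ∃ (v : Fin (n + 1) → EuclideanSpace ℝ (Fin n))
      (lam : Fin (n + 1) → (EuclideanSpace ℝ (Fin n) →ᵃ[ℝ] ℝ)),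
      AffineIndependent ℝ v ∧ IsLagrangeBasis v lam ∧
      (∀ j, v j ∈ cubeVertices n) ∧
      (∀ j k, j ≠ k → dist (v j) (v k) = Real.sqrt (((n : ℝ) + 1) / 2)) ∧
      xiInd (unitCube n) v = n ∧
      alphaInd (unitCube n) v = n ∧
      xiMin n = n ∧
      (∀ i, axialDiameter i (simplexSet v) = 1) ∧
      unitCube n ⊆ simplexHomothet v n ∧
      (∀ j, ∃! y, y ∈ cubeVertices n ∧ lam j y = (1 - (n : ℝ)) / ((n : ℝ) + 1)) := by
  have hsq : ∀ j, H j 0 * H j 0 = 1 := fun j => by rcases hHpm j 0 with h | h <;> simp [h]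
  set s : Fin (n + 1) → Fin n → ℝ := fun j i => H j 0 * H j i.succ
  have hs : ∀ j i, s j i = 1 ∨ s j i = -1 := fun j i => by
    rcases hHpm j 0 with h | h <;> rcases hHpm j i.succ with h' | h' <;> simp [s, h, h']
  have hrow : Pairwise fun j k => ∑ i, s j i * s k i = -1 := fun j k hjk =>
    sum_mul_succ_of_orthogonal_rows H (hsq j) (hsq k) (by simp [hH, Matrix.one_apply_ne hjk])
  have hl := isLagrangeBasis_signVertex hs hrow
  have hS := simplexSet_signVertex_subset_unitCube hs
  have hQ := unitCube_subset_simplexHomothet_signVertex hn hs hrow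
  have hξ := hl.xiInd_unitCube_eq hn hS hQ
  refine ⟨_, _, hl.affineIndependent, hl, fun j => signVertex_mem_cubeVertices (hs j),
    fun j k hjk => ?_, hξ, hl.alphaInd_unitCube_eq hn hS hQ,
    xiMin_eq_of_xiInd_eq hl.affineIndependent hS hξ, axialDiameter_simplexSet_signVertex hs hrow,
    hQ, fun j => existsUnique_signLagrange_eq (hs j)⟩
  rw [dist_signVertex (hs j) (hs k), hrow hjk, sub_neg_eq_add]
end
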